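/- arXiv:1410.6762 — 2 statements merged into one kernel-verified Lean document; each statement's English description precedes it below -/
import Mathlib

section
/- Suppose M : [0,∞) → [0,∞) is continuous, M(t) > 0 for t > 0, and t·M(t) ≤ γ·𝓜(t) for all t ≥ 0 with some γ ≥ 1. If σ > 2γ, then lim_{t→∞} 𝓜(t)/t^{σ/2} = 0. -/
open MeasureTheory Set Filter

theorem stmt_2 (M : ℝ → ℝ) (γ σ : ℝ)
    (hMcont : Continuous M)
    (hMnonneg : ∀ t, 0 ≤ t → 0 ≤ M t)
    (hMpos : ∀ t, 0 < t → 0 < M t)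
    (hγ : 1 ≤ γ)
    (hσ : 2 * γ < σ)
    (hAR : ∀ t, 0 ≤ t → t * M t ≤ γ * ∫ τ in (0:ℝ)..t, M τ) :
    Tendsto (fun t : ℝ => (∫ τ in (0:ℝ)..t, M τ) / t ^ (σ / 2)) atTop (nhds 0) := by
  set F : ℝ → ℝ := fun t => ∫ τ in (0:ℝ)..t, M τ with hF
  have hFderiv : ∀ t : ℝ, HasDerivAt F (M t) t := fun t =>
    (hMcont.integral_hasStrictDerivAt 0 t).hasDerivAt
  have hFnonneg : ∀ t, 0 ≤ t → 0 ≤ F t := by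
    intro t ht
    exact intervalIntegral.integral_nonneg ht (fun x hx => hMnonneg x hx.1)
  set g : ℝ → ℝ := fun t => F t * t ^ (-γ) with hg
  have hderiv : ∀ t : ℝ, 0 < t →
      HasDerivAt g (M t * t ^ (-γ) + F t * (-γ * t ^ (-γ - 1))) t := by
    intro t ht
    exact (hFderiv t).mul (Real.hasDerivAt_rpow_const (Or.inl ht.ne'))
  have hganti : AntitoneOn g (Ici 1) := by
    apply antitoneOn_of_deriv_nonpos (convex_Ici 1)
    · intro t ht
      exact (hderiv t (lt_of_lt_of_le one_pos ht)).continuousAt.continuousWithinAt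
    · intro t ht
      rw [interior_Ici] at ht
      exact (hderiv t (lt_trans one_pos ht)).differentiableAt.differentiableWithinAt
    · intro t ht
      rw [interior_Ici] at ht
      have htpos : (0:ℝ) < t := lt_trans one_pos ht
      rw [(hderiv t htpos).deriv]
      have key : t * M t ≤ γ * F t := hAR t htpos.le
      have h1 : t ^ (-γ) = t * t ^ (-γ - 1) := by
        have := Real.rpow_add htpos 1 (-γ - 1)
        rw [Real.rpow_one] at this
        nth_rewrite 1 [show -γ = 1 + (-γ - 1) by ring]
        exact this
      have hp : (0:ℝ) ≤ t ^ (-γ - 1) := Real.rpow_nonneg htpos.le _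
      rw [h1]
      nlinarith [mul_le_mul_of_nonneg_right key hp]
  have hbound : ∀ t : ℝ, 1 ≤ t → F t ≤ F 1 * t ^ γ := by
    intro t ht
    have htpos : (0:ℝ) < t := lt_of_lt_of_le one_pos ht
    have h := hganti (mem_Ici.mpr le_rfl) (mem_Ici.mpr ht) ht
    simp only [hg, Real.one_rpow, mul_one] at h
    have h2 := mul_le_mul_of_nonneg_right h (Real.rpow_nonneg htpos.le γ)
    rwa [mul_assoc, ← Real.rpow_add htpos, neg_add_cancel, Real.rpow_zero, mul_one] at h2
  have hupper : Tendsto (fun t : ℝ => F 1 * t ^ (γ - σ / 2)) atTop (nhds 0) := by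
    have := (tendsto_rpow_neg_atTop (by linarith : (0:ℝ) < σ / 2 - γ)).const_mul (F 1)
    simpa [neg_sub] using this
  apply tendsto_of_tendsto_of_tendsto_of_le_of_le' tendsto_const_nhds hupper
  · filter_upwards [eventually_ge_atTop (1:ℝ)] with t ht
    have htpos : (0:ℝ) < t := lt_of_lt_of_le one_pos ht
    exact div_nonneg (hFnonneg t htpos.le) (Real.rpow_nonneg htpos.le _)
  · filter_upwards [eventually_ge_atTop (1:ℝ)] with t ht
    have htpos : (0:ℝ) < t := lt_of_lt_of_le one_pos ht
    rw [div_le_iff₀ (Real.rpow_pos_of_pos htpos _)]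
    calc F t ≤ F 1 * t ^ γ := hbound t ht
      _ = F 1 * t ^ (γ - σ / 2) * t ^ (σ / 2) := by
          rw [mul_assoc, ← Real.rpow_add htpos]; ring_nf
end

section
/- Let m ∈ (0,1) and M(t) = (1+t)^m + (1+t)^{-1}. Set 𝓜(t) = ∫₀ᵗ M(τ)dτ. Then t·M(t) ≤ (m+1)·𝓜(t) for all t ≥ 0. -/
open MeasureTheory

theorem stmt_14 (m : ℝ) (hm0 : 0 < m) (hm1 : m < 1) :
    ∀ t ≥ (0:ℝ),
      t * ((1 + t) ^ m + (1 + t)⁻¹) ≤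
        (m + 1) * ∫ τ in (0:ℝ)..t, ((1 + τ) ^ m + (1 + τ)⁻¹) := by
  intro t ht
  have hs0 : (0:ℝ) < 1 + t := by linarith
  have huicc : ∀ x ∈ Set.uIcc (0:ℝ) t, (0:ℝ) < 1 + x := by
    intro x hx
    rw [Set.uIcc_of_le ht] at hx
    linarith [hx.1]
  have hi1 : IntervalIntegrable (fun τ : ℝ => (1 + τ) ^ m) volume 0 t := by
    apply ContinuousOn.intervalIntegrable
    apply ContinuousOn.rpow_const (by fun_prop)
    intro x hx
    exact Or.inl (ne_of_gt (huicc x hx))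
  have hi2 : IntervalIntegrable (fun τ : ℝ => (1 + τ)⁻¹) volume 0 t := by
    apply ContinuousOn.intervalIntegrable
    exact ContinuousOn.inv₀ (by fun_prop) (fun x hx => ne_of_gt (huicc x hx))
  rw [intervalIntegral.integral_add hi1 hi2]
  have e1 : (∫ τ in (0:ℝ)..t, (1 + τ) ^ m) = ((1 + t) ^ (m + 1) - 1) / (m + 1) := by
    have := intervalIntegral.integral_comp_add_left (a := (0:ℝ)) (b := t)
      (fun x : ℝ => x ^ m) 1
    rw [this]
    rw [integral_rpow (Or.inl (by linarith))]
    norm_num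
  have e2 : (∫ τ in (0:ℝ)..t, (1 + τ)⁻¹) = Real.log (1 + t) := by
    have := intervalIntegral.integral_comp_add_left (a := (0:ℝ)) (b := t)
      (fun x : ℝ => x⁻¹) 1
    rw [this]
    rw [integral_inv]
    · norm_num
    · rw [Set.uIcc_of_le (by linarith : (1:ℝ) + 0 ≤ 1 + t)]
      intro h
      simp only [Set.mem_Icc] at h
      linarith [h.1]
  rw [e1, e2]
  have h1 : (1:ℝ) ≤ (1 + t) ^ m := Real.one_le_rpow (by linarith) (le_of_lt hm0)
  have hlog : 1 - (1 + t)⁻¹ ≤ Real.log (1 + t) := by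
    have := Real.log_le_sub_one_of_pos (inv_pos.mpr hs0)
    rw [Real.log_inv] at this
    linarith
  have hlog0 : 0 ≤ Real.log (1 + t) := Real.log_nonneg (by linarith)
  have hpow : (1 + t) ^ (m + 1) = (1 + t) ^ m * (1 + t) := by
    rw [Real.rpow_add hs0, Real.rpow_one]
  have hinv : (1 + t) * (1 + t)⁻¹ = 1 := mul_inv_cancel₀ (ne_of_gt hs0)
  have hm1' : m + 1 > 0 := by linarith
  rw [hpow]
  have key : (m + 1) * (((1 + t) ^ m * (1 + t) - 1) / (m + 1) + Real.log (1 + t))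
      = (1 + t) ^ m * (1 + t) - 1 + (m + 1) * Real.log (1 + t) := by
    field_simp
  rw [key]
  nlinarith [mul_nonneg hm0.le hlog0, inv_pos.mpr hs0]
end
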